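/- arXiv:1510.04521 — 4 statements merged into one kernel-verified Lean document; each statement's English description precedes it below -/
import Mathlib

section
/- Let K be a nonempty class of algebras of the same signature τ. Then: (i) K is closed under Tra and P if and only if K is the class of all models of some set of τ-identities of height 1; (ii) K is closed under Ret and P if and only if K is the class of all models of some set of τ-identities of height at most 1. -/
/-! ### Algebras, terms, identities -/

/-- An algebra of functional signature `(F, ar)` (with nonempty domain, as usual in
universal algebra). -/
structure BAlg (F : Type) (ar : F → ℕ) : Type 1 where
  D : Type
  nonempty : Nonempty D
  ops : ∀ f : F, (Fin (ar f) → D) → D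

/-- Terms of signature `(F, ar)` over variables `V`. -/
inductive Term (F : Type) (ar : F → ℕ) (V : Type) : Type where
  | var (v : V) : Term F ar V
  | app (f : F) (t : Fin (ar f) → Term F ar V) : Term F ar V

/-- Evaluation of a term in an algebra under a variable assignment. -/
def Term.eval {F : Type} {ar : F → ℕ} {V D : Type}
    (ops : ∀ f : F, (Fin (ar f) → D) → D) (v : V → D) : Term F ar V → D
  | .var x => v x
  | .app f t => ops f (fun i => (t i).eval ops v)

/-- A term has height 1: a single operation symbol applied to variables. -/
def Term.IsHeight1 {F : Type} {ar : F → ℕ} {V : Type} : Term F ar V → Prop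
  | .var _ => False
  | .app _ t => ∀ i, ∃ x, t i = Term.var x

/-- A term has height at most 1: a variable, or an operation symbol applied to variables. -/
def Term.IsHeightLe1 {F : Type} {ar : F → ℕ} {V : Type} : Term F ar V → Prop
  | .var _ => True
  | .app _ t => ∀ i, ∃ x, t i = Term.var x

/-- An identity is a pair of terms over the variables `ℕ` (universally quantified). -/
abbrev Identity (F : Type) (ar : F → ℕ) := Term F ar ℕ × Term F ar ℕ

/-- An algebra satisfies an identity. -/
def SatisfiesId {F : Type} {ar : F → ℕ} (A : BAlg F ar) (e : Identity F ar) : Prop :=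
  ∀ v : ℕ → A.D, e.1.eval A.ops v = e.2.eval A.ops v

section Ops

variable {F : Type} {ar : F → ℕ}

/-- `h` is an algebra homomorphism. -/
def AlgHomOf (A B : BAlg F ar) (h : A.D → B.D) : Prop :=
  ∀ f t, h (A.ops f t) = B.ops f (fun i => h (t i))

/-- `H K`: homomorphic images of members of `K` (up to renaming of elements). -/
def HAlg (K : Set (BAlg F ar)) : Set (BAlg F ar) :=
  { B | ∃ A ∈ K, ∃ h : A.D → B.D, Function.Surjective h ∧ AlgHomOf A B h }

/-- `S K`: subalgebras of members of `K` (up to renaming of elements). -/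
def SAlg (K : Set (BAlg F ar)) : Set (BAlg F ar) :=
  { B | ∃ A ∈ K, ∃ h : B.D → A.D, Function.Injective h ∧ AlgHomOf B A h }

/-- `P K`: products of families of members of `K` (up to renaming of elements). -/
def PAlg (K : Set (BAlg F ar)) : Set (BAlg F ar) :=
  { B | ∃ (I : Type) (A : I → BAlg F ar), (∀ i, A i ∈ K) ∧
      ∃ e : B.D ≃ (∀ i, (A i).D),
        ∀ f t, e (B.ops f t) = fun i => (A i).ops f (fun j => e (t j) i) }

/-- `Pfin K`: finite products of members of `K` (up to renaming of elements). -/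
def PfinAlg (K : Set (BAlg F ar)) : Set (BAlg F ar) :=
  { B | ∃ (m : ℕ) (A : Fin m → BAlg F ar), (∀ i, A i ∈ K) ∧
      ∃ e : B.D ≃ (∀ i, (A i).D),
        ∀ f t, e (B.ops f t) = fun i => (A i).ops f (fun j => e (t j) i) }

/-- `Tra K`: reflections of members of `K`. -/
def TraAlg (K : Set (BAlg F ar)) : Set (BAlg F ar) :=
  { B | ∃ A ∈ K, ∃ (h1 : B.D → A.D) (h2 : A.D → B.D),
      ∀ f t, B.ops f t = h2 (A.ops f (fun i => h1 (t i))) }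

/-- `Ret K`: retractions of members of `K`. -/
def RetAlg (K : Set (BAlg F ar)) : Set (BAlg F ar) :=
  { B | ∃ A ∈ K, ∃ (h1 : B.D → A.D) (h2 : A.D → B.D), (∀ b, h2 (h1 b) = b) ∧
      ∀ f t, B.ops f t = h2 (A.ops f (fun i => h1 (t i))) }

end Ops

/-! ### Auxiliary machinery for the proof -/

namespace Stmt13Aux

open Classical

variable {F : Type} {ar : F → ℕ}

/-! #### Preservation lemmas (easy directions) -/

/-- Evaluation commutes with a product isomorphism. -/
theorem prod_eval {I : Type} (A : I → BAlg F ar) (B : BAlg F ar)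
    (e : B.D ≃ ∀ i, (A i).D)
    (he : ∀ f t, e (B.ops f t) = fun i => (A i).ops f (fun j => e (t j) i))
    (v : ℕ → B.D) :
    ∀ t : Term F ar ℕ, e (t.eval B.ops v) = fun i => t.eval (A i).ops (fun n => e (v n) i)
  | .var x => rfl
  | .app f s => by
    show e (B.ops f _) = _
    rw [he]
    funext i
    show (A i).ops f _ = (A i).ops f _
    congr 1
    funext j
    exact congrFun (prod_eval A B e he v (s j)) i

/-- Products preserve satisfaction of arbitrary identities. -/
theorem prod_sat {I : Type} (A : I → BAlg F ar) (B : BAlg F ar)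
    (e : B.D ≃ ∀ i, (A i).D)
    (he : ∀ f t, e (B.ops f t) = fun i => (A i).ops f (fun j => e (t j) i))
    (ep : Identity F ar) (hA : ∀ i, SatisfiesId (A i) ep) : SatisfiesId B ep := by
  intro v
  apply e.injective
  rw [prod_eval A B e he v ep.1, prod_eval A B e he v ep.2]
  funext i
  exact hA i _

/-- Evaluation of a height-1 term in a reflection. -/
theorem refl_eval1 {A B : BAlg F ar} (h1 : B.D → A.D) (h2 : A.D → B.D)
    (hop : ∀ f t, B.ops f t = h2 (A.ops f (fun i => h1 (t i))))
    (t : Term F ar ℕ) (ht : t.IsHeight1) (v : ℕ → B.D) :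
    t.eval B.ops v = h2 (t.eval A.ops (fun n => h1 (v n))) := by
  cases t with
  | var x => exact absurd ht id
  | app f s =>
    show B.ops f _ = h2 (A.ops f _)
    rw [hop]
    apply congrArg h2
    apply congrArg (A.ops f)
    funext i
    obtain ⟨x, hx⟩ := ht i
    rw [hx]
    rfl

/-- Evaluation of a height-≤1 term in a retraction. -/
theorem refl_evalLe1 {A B : BAlg F ar} (h1 : B.D → A.D) (h2 : A.D → B.D)
    (hret : ∀ b, h2 (h1 b) = b)
    (hop : ∀ f t, B.ops f t = h2 (A.ops f (fun i => h1 (t i))))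
    (t : Term F ar ℕ) (ht : t.IsHeightLe1) (v : ℕ → B.D) :
    t.eval B.ops v = h2 (t.eval A.ops (fun n => h1 (v n))) := by
  cases t with
  | var x => exact (hret (v x)).symm
  | app f s =>
    show B.ops f _ = h2 (A.ops f _)
    rw [hop]
    apply congrArg h2
    apply congrArg (A.ops f)
    funext i
    obtain ⟨x, hx⟩ := ht i
    rw [hx]
    rfl

/-- Reflections preserve height-1 identities. -/
theorem tra_sat {A B : BAlg F ar} (h1 : B.D → A.D) (h2 : A.D → B.D)
    (hop : ∀ f t, B.ops f t = h2 (A.ops f (fun i => h1 (t i))))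
    (e : Identity F ar) (he1 : e.1.IsHeight1) (he2 : e.2.IsHeight1)
    (hA : SatisfiesId A e) : SatisfiesId B e := by
  intro v
  rw [refl_eval1 h1 h2 hop e.1 he1 v, refl_eval1 h1 h2 hop e.2 he2 v]
  exact congrArg h2 (hA _)

/-- Retractions preserve height-≤1 identities. -/
theorem ret_sat {A B : BAlg F ar} (h1 : B.D → A.D) (h2 : A.D → B.D)
    (hret : ∀ b, h2 (h1 b) = b)
    (hop : ∀ f t, B.ops f t = h2 (A.ops f (fun i => h1 (t i))))
    (e : Identity F ar) (he1 : e.1.IsHeightLe1) (he2 : e.2.IsHeightLe1)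
    (hA : SatisfiesId A e) : SatisfiesId B e := by
  intro v
  rw [refl_evalLe1 h1 h2 hret hop e.1 he1 v, refl_evalLe1 h1 h2 hret hop e.2 he2 v]
  exact congrArg h2 (hA _)

/-! #### Patterns: height-≤1 term instances over the domain of `B` -/

/-- Application patterns: an operation symbol applied to elements of `B`. -/
abbrev AppPat (B : BAlg F ar) := Σ f : F, (Fin (ar f) → B.D)

/-- Height-≤1 patterns: an application pattern or a single element. -/
abbrev Pat (B : BAlg F ar) := AppPat B ⊕ B.D

/-- Evaluation of a pattern in an algebra `A` under `v : B.D → A.D`. -/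
def Pat.peval {B : BAlg F ar} (A : BAlg F ar) (v : B.D → A.D) : Pat B → A.D
  | .inl ⟨f, σ⟩ => A.ops f (fun i => v (σ i))
  | .inr b => v b

/-- The value of a pattern in `B` itself. -/
def Pat.valB {B : BAlg F ar} : Pat B → B.D
  | .inl ⟨f, σ⟩ => B.ops f σ
  | .inr b => b

/-- The elements of `B` occurring in a pattern. -/
def Pat.memP {B : BAlg F ar} (b : B.D) : Pat B → Prop
  | .inl ⟨_, σ⟩ => ∃ i, σ i = b
  | .inr b' => b' = b

/-- The term associated to a pattern, with variables coded by `d`. -/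
def Pat.term {B : BAlg F ar} (d : B.D → ℕ) : Pat B → Term F ar ℕ
  | .inl ⟨f, σ⟩ => .app f (fun i => .var (d (σ i)))
  | .inr b => .var (d b)

theorem Pat.term_eval {B A : BAlg F ar} (d : B.D → ℕ) (v : ℕ → A.D) :
    ∀ p : Pat B, (p.term d).eval A.ops v = Pat.peval A (fun b => v (d b)) p
  | .inl ⟨f, σ⟩ => rfl
  | .inr b => rfl

theorem Pat.term_heightLe1 {B : BAlg F ar} (d : B.D → ℕ) :
    ∀ p : Pat B, (p.term d).IsHeightLe1
  | .inl ⟨f, σ⟩ => fun i => ⟨d (σ i), rfl⟩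
  | .inr _ => trivial

theorem Pat.term_height1 {B : BAlg F ar} (d : B.D → ℕ) (p : AppPat B) :
    (Pat.term d (.inl p)).IsHeight1 := by
  obtain ⟨f, σ⟩ := p
  exact fun i => ⟨d (σ i), rfl⟩

/-- Size of a pattern (for enumerating its elements). -/
def Pat.psz {B : BAlg F ar} : Pat B → ℕ
  | .inl ⟨f, _⟩ => ar f
  | .inr _ => 1

/-- Enumeration of the elements of a pattern. -/
def Pat.pget {B : BAlg F ar} (b₀ : B.D) : Pat B → ℕ → B.D
  | .inl ⟨f, σ⟩, n => if h : n < ar f then σ ⟨n, h⟩ else b₀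
  | .inr b, _ => b

theorem Pat.pget_cover {B : BAlg F ar} (b₀ : B.D) :
    ∀ p : Pat B, ∀ b : B.D, Pat.memP b p → ∃ n, n < p.psz ∧ Pat.pget b₀ p n = b
  | .inl ⟨f, σ⟩, b, ⟨i, hi⟩ => by
    refine ⟨i.1, i.2, ?_⟩
    show (if h : i.1 < ar f then σ ⟨i.1, h⟩ else b₀) = b
    rw [dif_pos i.2]
    simpa using hi
  | .inr b', b, h => ⟨0, Nat.zero_lt_one, h⟩

/-- Enumeration of all elements in a pair of patterns. -/
def uOf {B : BAlg F ar} (b₀ : B.D) (p q : Pat B) : ℕ → B.D :=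
  fun n => if n < p.psz then Pat.pget b₀ p n else Pat.pget b₀ q (n - p.psz)

theorem uOf_cover_left {B : BAlg F ar} (b₀ : B.D) (p q : Pat B) (b : B.D)
    (h : Pat.memP b p) : b ∈ Set.range (uOf b₀ p q) := by
  obtain ⟨n, hn, hb⟩ := Pat.pget_cover b₀ p b h
  exact ⟨n, by simp [uOf, hn, hb]⟩

theorem uOf_cover_right {B : BAlg F ar} (b₀ : B.D) (p q : Pat B) (b : B.D)
    (h : Pat.memP b q) : b ∈ Set.range (uOf b₀ p q) := by
  obtain ⟨n, hn, hb⟩ := Pat.pget_cover b₀ q b h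
  refine ⟨p.psz + n, ?_⟩
  simp [uOf, Nat.add_sub_cancel_left, hb]

/-- Coding of elements by natural numbers, as indices into `u`. -/
noncomputable def dOf {B : BAlg F ar} (u : ℕ → B.D) (b : B.D) : ℕ := sInf {n | u n = b}

theorem u_dOf {B : BAlg F ar} (u : ℕ → B.D) (b : B.D) (h : b ∈ Set.range u) :
    u (dOf u b) = b := by
  obtain ⟨n, hn⟩ := h
  exact Nat.sInf_mem (⟨n, hn⟩ : {n | u n = b}.Nonempty)

theorem valB_eval {B : BAlg F ar} (u : ℕ → B.D) :
    ∀ p : Pat B, (∀ b, Pat.memP b p → u (dOf u b) = b) →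
      (p.term (dOf u)).eval B.ops u = p.valB
  | .inl ⟨f, σ⟩, hud => by
    show B.ops f (fun i => u (dOf u (σ i))) = B.ops f σ
    apply congrArg (B.ops f)
    funext i
    exact hud (σ i) ⟨i, rfl⟩
  | .inr b, hud => hud b rfl

/-! #### The transfer lemmas -/

/-- If `B` satisfies all height-≤1 identities valid in `K`, then pattern equalities
valid throughout `K` also hold in `B`. -/
theorem transferLe {K : Set (BAlg F ar)} {B : BAlg F ar}
    (hB : ∀ e : Identity F ar, e.1.IsHeightLe1 → e.2.IsHeightLe1 →
      (∀ A ∈ K, SatisfiesId A e) → SatisfiesId B e)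
    (p q : Pat B)
    (h : ∀ A ∈ K, ∀ v : B.D → A.D, Pat.peval A v p = Pat.peval A v q) :
    p.valB = q.valB := by
  obtain ⟨b₀⟩ := B.nonempty
  set u := uOf b₀ p q with hu
  have hKid : ∀ A ∈ K, SatisfiesId A (p.term (dOf u), q.term (dOf u)) := by
    intro A hA v
    show (p.term (dOf u)).eval A.ops v = (q.term (dOf u)).eval A.ops v
    rw [Pat.term_eval, Pat.term_eval]
    exact h A hA _
  have hBid := hB (p.term (dOf u), q.term (dOf u))
    (Pat.term_heightLe1 _ p) (Pat.term_heightLe1 _ q) hKid u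
  rwa [valB_eval u p (fun b hb => u_dOf u b (uOf_cover_left b₀ p q b hb)),
    valB_eval u q (fun b hb => u_dOf u b (uOf_cover_right b₀ p q b hb))] at hBid

/-- Same as `transferLe` but for application patterns and height-1 identities. -/
theorem transfer1 {K : Set (BAlg F ar)} {B : BAlg F ar}
    (hB : ∀ e : Identity F ar, e.1.IsHeight1 → e.2.IsHeight1 →
      (∀ A ∈ K, SatisfiesId A e) → SatisfiesId B e)
    (p q : AppPat B)
    (h : ∀ A ∈ K, ∀ v : B.D → A.D,
      Pat.peval A v (.inl p) = Pat.peval A v (.inl q)) :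
    Pat.valB (B := B) (.inl p) = Pat.valB (.inl q) := by
  obtain ⟨b₀⟩ := B.nonempty
  set u := uOf b₀ (Sum.inl p : Pat B) (.inl q) with hu
  have hKid : ∀ A ∈ K,
      SatisfiesId A (Pat.term (dOf u) (.inl p), Pat.term (dOf u) (.inl q)) := by
    intro A hA v
    show (Pat.term (dOf u) (.inl p)).eval A.ops v
      = (Pat.term (dOf u) (.inl q)).eval A.ops v
    rw [Pat.term_eval, Pat.term_eval]
    exact h A hA _
  have hBid := hB (Pat.term (dOf u) (.inl p), Pat.term (dOf u) (.inl q))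
    (Pat.term_height1 _ p) (Pat.term_height1 _ q) hKid u
  rwa [valB_eval u (.inl p) (fun b hb => u_dOf u b (uOf_cover_left b₀ _ _ b hb)),
    valB_eval u (.inl q) (fun b hb => u_dOf u b (uOf_cover_right b₀ _ _ b hb))] at hBid

/-! #### The main constructions -/

theorem memTra {K : Set (BAlg F ar)} {B : BAlg F ar}
    (hB : ∀ e : Identity F ar, e.1.IsHeight1 → e.2.IsHeight1 →
      (∀ A ∈ K, SatisfiesId A e) → SatisfiesId B e) :
    B ∈ TraAlg (PAlg K) := by
  classical
  obtain ⟨b₀⟩ := B.nonempty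
  let I := {pq : AppPat B × AppPat B // ∃ A, A ∈ K ∧ ∃ v : B.D → A.D,
    Pat.peval A v (.inl pq.1) ≠ Pat.peval A v (.inl pq.2)}
  let AA : I → BAlg F ar := fun i => i.2.choose
  have hAA : ∀ i : I, AA i ∈ K := fun i => i.2.choose_spec.1
  let vv : ∀ i : I, B.D → (AA i).D := fun i => i.2.choose_spec.2.choose
  have hvv : ∀ i : I, Pat.peval (AA i) (vv i) (.inl i.1.1)
      ≠ Pat.peval (AA i) (vv i) (.inl i.1.2) :=
    fun i => i.2.choose_spec.2.choose_spec
  let C : BAlg F ar := ⟨∀ i : I, (AA i).D, ⟨fun i => (AA i).nonempty.some⟩,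
    fun f t i => (AA i).ops f (fun j => t j i)⟩
  have hC : C ∈ PAlg K := ⟨I, AA, hAA, Equiv.refl _, fun f t => rfl⟩
  let φ : AppPat B → C.D := fun p i => Pat.peval (AA i) (vv i) (.inl p)
  have sep : ∀ p q : AppPat B, φ p = φ q →
      ∀ A ∈ K, ∀ v : B.D → A.D, Pat.peval A v (.inl p) = Pat.peval A v (.inl q) := by
    intro p q hpq A hA v
    by_contra hne
    exact hvv ⟨(p, q), ⟨A, hA, v, hne⟩⟩ (congrFun hpq _)
  have wd : ∀ p q : AppPat B, φ p = φ q →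
      Pat.valB (B := B) (.inl p) = Pat.valB (.inl q) :=
    fun p q h => transfer1 hB p q (sep p q h)
  let h1 : B.D → C.D := fun b i => vv i b
  have hφ : ∀ (f : F) (t : Fin (ar f) → B.D),
      C.ops f (fun j => h1 (t j)) = φ ⟨f, t⟩ := fun f t => rfl
  let h2 : C.D → B.D := fun c =>
    if h : ∃ p : AppPat B, φ p = c then Pat.valB (.inl h.choose) else b₀
  refine ⟨C, hC, h1, h2, fun f t => ?_⟩
  have hex : ∃ p : AppPat B, φ p = C.ops f (fun i => h1 (t i)) := ⟨⟨f, t⟩, (hφ f t).symm⟩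
  show B.ops f t = h2 (C.ops f (fun i => h1 (t i)))
  have : h2 (C.ops f (fun i => h1 (t i))) = Pat.valB (.inl hex.choose) := dif_pos hex
  rw [this]
  exact (wd hex.choose ⟨f, t⟩ (hex.choose_spec.trans (hφ f t))).symm

theorem memRet {K : Set (BAlg F ar)} {B : BAlg F ar}
    (hB : ∀ e : Identity F ar, e.1.IsHeightLe1 → e.2.IsHeightLe1 →
      (∀ A ∈ K, SatisfiesId A e) → SatisfiesId B e) :
    B ∈ RetAlg (PAlg K) := by
  classical
  obtain ⟨b₀⟩ := B.nonempty
  let I := {pq : Pat B × Pat B // ∃ A, A ∈ K ∧ ∃ v : B.D → A.D,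
    Pat.peval A v pq.1 ≠ Pat.peval A v pq.2}
  let AA : I → BAlg F ar := fun i => i.2.choose
  have hAA : ∀ i : I, AA i ∈ K := fun i => i.2.choose_spec.1
  let vv : ∀ i : I, B.D → (AA i).D := fun i => i.2.choose_spec.2.choose
  have hvv : ∀ i : I, Pat.peval (AA i) (vv i) i.1.1 ≠ Pat.peval (AA i) (vv i) i.1.2 :=
    fun i => i.2.choose_spec.2.choose_spec
  let C : BAlg F ar := ⟨∀ i : I, (AA i).D, ⟨fun i => (AA i).nonempty.some⟩,
    fun f t i => (AA i).ops f (fun j => t j i)⟩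
  have hC : C ∈ PAlg K := ⟨I, AA, hAA, Equiv.refl _, fun f t => rfl⟩
  let φ : Pat B → C.D := fun p i => Pat.peval (AA i) (vv i) p
  have sep : ∀ p q : Pat B, φ p = φ q →
      ∀ A ∈ K, ∀ v : B.D → A.D, Pat.peval A v p = Pat.peval A v q := by
    intro p q hpq A hA v
    by_contra hne
    exact hvv ⟨(p, q), ⟨A, hA, v, hne⟩⟩ (congrFun hpq _)
  have wd : ∀ p q : Pat B, φ p = φ q → p.valB = q.valB :=
    fun p q h => transferLe hB p q (sep p q h)
  let h1 : B.D → C.D := fun b i => vv i b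
  have hφ : ∀ (f : F) (t : Fin (ar f) → B.D),
      C.ops f (fun j => h1 (t j)) = φ (.inl ⟨f, t⟩) := fun f t => rfl
  have hφr : ∀ b : B.D, h1 b = φ (.inr b) := fun b => rfl
  let h2 : C.D → B.D := fun c =>
    if h : ∃ p : Pat B, φ p = c then h.choose.valB else b₀
  refine ⟨C, hC, h1, h2, ?_, fun f t => ?_⟩
  · intro b
    have hex : ∃ p : Pat B, φ p = h1 b := ⟨.inr b, rfl⟩
    have : h2 (h1 b) = hex.choose.valB := dif_pos hex
    rw [this]
    exact wd hex.choose (.inr b) (hex.choose_spec.trans (hφr b))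
  · have hex : ∃ p : Pat B, φ p = C.ops f (fun i => h1 (t i)) := ⟨.inl ⟨f, t⟩, (hφ f t).symm⟩
    show B.ops f t = h2 (C.ops f (fun i => h1 (t i)))
    have : h2 (C.ops f (fun i => h1 (t i))) = hex.choose.valB := dif_pos hex
    rw [this]
    exact (wd hex.choose (.inl ⟨f, t⟩) (hex.choose_spec.trans (hφ f t))).symm

end Stmt13Aux

/-- Corollary 5.4, "Linear Birkhoff". Let `K` be a nonempty class of
algebras of the same signature. Then (i) `K` is closed under `Tra` and `P` iff `K` is
the class of all models of some set of identities of height 1, and (ii) `K` is closed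
under `Ret` and `P` iff `K` is the class of all models of some set of identities of
height at most 1. -/
theorem stmt13 {F : Type} {ar : F → ℕ} (K : Set (BAlg F ar)) (hK : K.Nonempty) :
    ((TraAlg K ⊆ K ∧ PAlg K ⊆ K) ↔
      ∃ E : Set (Identity F ar), (∀ e ∈ E, e.1.IsHeight1 ∧ e.2.IsHeight1) ∧
        K = { A | ∀ e ∈ E, SatisfiesId A e }) ∧
    ((RetAlg K ⊆ K ∧ PAlg K ⊆ K) ↔
      ∃ E : Set (Identity F ar), (∀ e ∈ E, e.1.IsHeightLe1 ∧ e.2.IsHeightLe1) ∧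
        K = { A | ∀ e ∈ E, SatisfiesId A e }) := by
  have traMono : ∀ K1 K2 : Set (BAlg F ar), K1 ⊆ K2 → TraAlg K1 ⊆ TraAlg K2 := by
    rintro K1 K2 hsub B ⟨A, hA, h1, h2, hop⟩
    exact ⟨A, hsub hA, h1, h2, hop⟩
  have retMono : ∀ K1 K2 : Set (BAlg F ar), K1 ⊆ K2 → RetAlg K1 ⊆ RetAlg K2 := by
    rintro K1 K2 hsub B ⟨A, hA, h1, h2, hret, hop⟩
    exact ⟨A, hsub hA, h1, h2, hret, hop⟩
  constructor
  · constructor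
    · rintro ⟨hT, hP⟩
      refine ⟨{e | e.1.IsHeight1 ∧ e.2.IsHeight1 ∧ ∀ A ∈ K, SatisfiesId A e},
        fun e he => ⟨he.1, he.2.1⟩, ?_⟩
      ext B
      constructor
      · exact fun hB e he => he.2.2 B hB
      · intro hB
        have : B ∈ TraAlg (PAlg K) :=
          Stmt13Aux.memTra (fun e h1 h2 hall => hB e ⟨h1, h2, hall⟩)
        exact hT (traMono _ _ hP this)
    · rintro ⟨E, hE, rfl⟩
      constructor
      · rintro B ⟨A, hA, h1, h2, hop⟩ e he
        exact Stmt13Aux.tra_sat h1 h2 hop e (hE e he).1 (hE e he).2 (hA e he)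
      · rintro B ⟨I, A, hAK, eq, heq⟩ e he
        exact Stmt13Aux.prod_sat A B eq heq e (fun i => hAK i e he)
  · constructor
    · rintro ⟨hT, hP⟩
      refine ⟨{e | e.1.IsHeightLe1 ∧ e.2.IsHeightLe1 ∧ ∀ A ∈ K, SatisfiesId A e},
        fun e he => ⟨he.1, he.2.1⟩, ?_⟩
      ext B
      constructor
      · exact fun hB e he => he.2.2 B hB
      · intro hB
        have : B ∈ RetAlg (PAlg K) :=
          Stmt13Aux.memRet (fun e h1 h2 hall => hB e ⟨h1, h2, hall⟩)
        exact hT (retMono _ _ hP this)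
    · rintro ⟨E, hE, rfl⟩
      constructor
      · rintro B ⟨A, hA, h1, h2, hret, hop⟩ e he
        exact Stmt13Aux.ret_sat h1 h2 hret hop e (hE e he).1 (hE e he).2 (hA e he)
      · rintro B ⟨I, A, hAK, eq, heq⟩ e he
        exact Stmt13Aux.prod_sat A B eq heq e (fun i => hAK i e he)
end

section
/- Let 𝒜 and ℬ be function clones such that the domain B of ℬ is finite. Then ℬ ∈ E Tra Pfin 𝒜 if and only if there exists a uniformly continuous h1 clone homomorphism from 𝒜 to ℬ. -/
/-! ### Relational structures, pp-formulas, pp-powers -/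

/-- A relational structure with signature `σ` (arities given by `ar`) on domain `D`. -/
structure RelStruct (σ : Type) (ar : σ → ℕ) (D : Type) where
  rel : ∀ s : σ, (Fin (ar s) → D) → Prop

section Rel

variable {σ : Type} {ar : σ → ℕ} {τ : Type} {br : τ → ℕ} {D E : Type}

/-- `h` is a homomorphism between two relational structures in the same signature. -/
def IsHomOf (SA : RelStruct σ ar D) (SB : RelStruct σ ar E) (h : D → E) : Prop :=
  ∀ s t, SA.rel s t → SB.rel s (fun i => h (t i))

/-- Homomorphic equivalence of relational structures in the same signature. -/
def HomEquiv (SA : RelStruct σ ar D) (SB : RelStruct σ ar E) : Prop :=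
  (∃ h, IsHomOf SA SB h) ∧ (∃ h, IsHomOf SB SA h)

/-- An automorphism of a relational structure. -/
def IsAutomorphism (S : RelStruct σ ar D) (g : D ≃ D) : Prop :=
  IsHomOf S S g ∧ IsHomOf S S g.symm

/-- ω-categoricity (for at most countable structures): for every `n` the componentwise
action of the automorphism group on `n`-tuples has finitely many orbits. -/
def OmegaCategorical (S : RelStruct σ ar D) : Prop :=
  ∀ n : ℕ, Set.Finite { O : Set (Fin n → D) | ∃ t : Fin n → D,
    O = { u | ∃ g : D ≃ D, IsAutomorphism S g ∧ (fun i => g (t i)) = u } }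

/-- A model-complete core: automorphisms are dense in endomorphisms. -/
def ModelCompleteCore (S : RelStruct σ ar D) : Prop :=
  ∀ e : D → D, IsHomOf S S e → ∀ F : Set D, F.Finite →
    ∃ g : D ≃ D, IsAutomorphism S g ∧ ∀ x ∈ F, g x = e x

/-- Primitive positive formulas over signature `(σ, ar)` with free variables of type `V`. -/
inductive PPFormula (σ : Type) (ar : σ → ℕ) : Type → Type 1 where
  | rel {V : Type} (s : σ) (t : Fin (ar s) → V) : PPFormula σ ar V
  | eq {V : Type} (x y : V) : PPFormula σ ar V
  | and {V : Type} (φ ψ : PPFormula σ ar V) : PPFormula σ ar V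
  | ex {V : Type} (φ : PPFormula σ ar (Option V)) : PPFormula σ ar V

/-- Satisfaction of a pp-formula under an assignment of the free variables. -/
def PPFormula.Sat (S : RelStruct σ ar D) : {V : Type} → PPFormula σ ar V → (V → D) → Prop
  | _, .rel s t, v => S.rel s (fun i => v (t i))
  | _, .eq x y, v => v x = v y
  | _, .and φ ψ, v => PPFormula.Sat S φ v ∧ PPFormula.Sat S ψ v
  | _, .ex φ, v => ∃ d : D, PPFormula.Sat S φ (fun o => Option.elim o d v)

/-- A relation (with coordinates indexed by `V`) is pp-definable in `S`. -/
def PpDefinable (S : RelStruct σ ar D) {V : Type} (R : (V → D) → Prop) : Prop :=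
  ∃ φ : PPFormula σ ar V, ∀ v, R v ↔ PPFormula.Sat S φ v

/-- `SB` is a pp-power of `SA`: `SB` is isomorphic to a structure with domain `D^n`
(`n ≥ 1`) whose relations, regarded as relations on `D` of `n`-fold arity,
are pp-definable in `SA`. -/
def IsPpPower (SA : RelStruct σ ar D) (SB : RelStruct τ br E) : Prop :=
  ∃ n : ℕ, 0 < n ∧ ∃ e : E ≃ (Fin n → D),
    ∀ s : τ, PpDefinable SA (fun v : Fin (br s) × Fin n → D =>
      SB.rel s (fun j => e.symm (fun i => v (j, i))))

/-- `SB` is homomorphically equivalent to a pp-power of `SA`. -/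
def HomEqPpPower (SA : RelStruct σ ar D) (SB : RelStruct τ br E) : Prop :=
  ∃ (C : Type) (SC : RelStruct τ br C), IsPpPower SA SC ∧ HomEquiv SB SC

end Rel

/-! ### Function clones (all operations have arity ≥ 1; arity index `n` means arity `n+1`) -/

/-- A set of finitary operations on `A`, where `C n` collects the `(n+1)`-ary members. -/
def OpSet (A : Type) := ∀ n : ℕ, Set ((Fin (n+1) → A) → A)

section Clone

variable {A B : Type}

/-- A function clone: contains all projections and is closed under composition. -/
structure IsClone (C : OpSet A) : Prop where
  proj : ∀ (n : ℕ) (i : Fin (n+1)), (fun t => t i) ∈ C n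
  comp : ∀ (n m : ℕ) (f : (Fin (n+1) → A) → A) (g : Fin (n+1) → ((Fin (m+1) → A) → A)),
    f ∈ C n → (∀ i, g i ∈ C m) → (fun t => f (fun i => g i t)) ∈ C m

/-- An arity-preserving assignment of operations on `B` to operations on `A`. -/
def CloneMap (A B : Type) := ∀ n : ℕ, ((Fin (n+1) → A) → A) → ((Fin (n+1) → B) → B)

/-- `ξ` maps the members of `CA` to members of `CB`. -/
def MapsCloneInto (CA : OpSet A) (CB : OpSet B) (ξ : CloneMap A B) : Prop :=
  ∀ n f, f ∈ CA n → ξ n f ∈ CB n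

/-- `ξ` preserves identities of height 1: it preserves taking minors (compositions
with projections). -/
def PreservesH1 (CA : OpSet A) (ξ : CloneMap A B) : Prop :=
  ∀ (n m : ℕ) (f : (Fin (n+1) → A) → A), f ∈ CA n → ∀ p : Fin (n+1) → Fin (m+1),
    ξ m (fun t => f (fun i => t (p i))) = fun t => ξ n f (fun i => t (p i))

/-- An h1 clone homomorphism from `CA` to `CB`. -/
def IsH1Hom (CA : OpSet A) (CB : OpSet B) (ξ : CloneMap A B) : Prop :=
  MapsCloneInto CA CB ξ ∧ PreservesH1 CA ξ

/-- `ξ` sends every projection to the same projection. -/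
def PreservesProj (ξ : CloneMap A B) : Prop :=
  ∀ (n : ℕ) (i : Fin (n+1)), ξ n (fun t => t i) = fun t => t i

/-- A strong h1 clone homomorphism: an h1 clone homomorphism preserving projections. -/
def IsStrongH1Hom (CA : OpSet A) (CB : OpSet B) (ξ : CloneMap A B) : Prop :=
  IsH1Hom CA CB ξ ∧ PreservesProj ξ

/-- A clone homomorphism: preserves projections and composition. -/
def IsCloneHom (CA : OpSet A) (CB : OpSet B) (ξ : CloneMap A B) : Prop :=
  MapsCloneInto CA CB ξ ∧ PreservesProj ξ ∧
    ∀ (n m : ℕ) (f : (Fin (n+1) → A) → A) (g : Fin (n+1) → ((Fin (m+1) → A) → A)),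
      f ∈ CA n → (∀ i, g i ∈ CA m) →
      ξ m (fun t => f (fun i => g i t)) = fun t => ξ n f (fun i => ξ m (g i) t)

/-- Uniform continuity of a map between function clones. -/
def UniformlyCont (CA : OpSet A) (ξ : CloneMap A B) : Prop :=
  ∀ Bf : Set B, Bf.Finite → ∃ Af : Set A, Af.Finite ∧
    ∀ (n : ℕ) (f g : (Fin (n+1) → A) → A), f ∈ CA n → g ∈ CA n →
      (∀ t : Fin (n+1) → A, (∀ i, t i ∈ Af) → f t = g t) →
      ∀ u : Fin (n+1) → B, (∀ i, u i ∈ Bf) → ξ n f u = ξ n g u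

/-- Continuity of a map between function clones (pointwise convergence topology). -/
def ContinuousCloneMap (CA : OpSet A) (ξ : CloneMap A B) : Prop :=
  ∀ (n : ℕ) (f : (Fin (n+1) → A) → A), f ∈ CA n → ∀ Bf : Set B, Bf.Finite →
    ∃ Af : Set A, Af.Finite ∧
      ∀ g, g ∈ CA n → (∀ t : Fin (n+1) → A, (∀ i, t i ∈ Af) → f t = g t) →
        ∀ u : Fin (n+1) → B, (∀ i, u i ∈ Bf) → ξ n f u = ξ n g u

/-- `CB ∈ E Tra 𝒜`: some reflection of `CA` is contained in `CB`. -/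
def InETra (CA : OpSet A) (CB : OpSet B) : Prop :=
  ∃ (h1 : B → A) (h2 : A → B), ∀ n f, f ∈ CA n →
    (fun t : Fin (n+1) → B => h2 (f (fun i => h1 (t i)))) ∈ CB n

/-- `CB ∈ E Tra Pfin 𝒜`: some reflection of a finite power of `CA` is contained in `CB`. -/
def InETraPfin (CA : OpSet A) (CB : OpSet B) : Prop :=
  ∃ (m : ℕ) (h1 : B → (Fin m → A)) (h2 : (Fin m → A) → B),
    ∀ n f, f ∈ CA n →
      (fun u : Fin (n+1) → B => h2 (fun j => f (fun i => h1 (u i) j))) ∈ CB n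

/-- `CB ∈ E Tra P 𝒜`: some reflection of a power of `CA` is contained in `CB`. -/
def InETraP (CA : OpSet A) (CB : OpSet B) : Prop :=
  ∃ (I : Type) (h1 : B → (I → A)) (h2 : (I → A) → B),
    ∀ n f, f ∈ CA n →
      (fun u : Fin (n+1) → B => h2 (fun j => f (fun i => h1 (u i) j))) ∈ CB n

/-- `CB ∈ E Ret Pfin 𝒜`. -/
def InERetPfin (CA : OpSet A) (CB : OpSet B) : Prop :=
  ∃ (m : ℕ) (h1 : B → (Fin m → A)) (h2 : (Fin m → A) → B),
    (∀ b, h2 (h1 b) = b) ∧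
    ∀ n f, f ∈ CA n →
      (fun u : Fin (n+1) → B => h2 (fun j => f (fun i => h1 (u i) j))) ∈ CB n

/-- `CB ∈ E Ret P 𝒜`. -/
def InERetP (CA : OpSet A) (CB : OpSet B) : Prop :=
  ∃ (I : Type) (h1 : B → (I → A)) (h2 : (I → A) → B),
    (∀ b, h2 (h1 b) = b) ∧
    ∀ n f, f ∈ CA n →
      (fun u : Fin (n+1) → B => h2 (fun j => f (fun i => h1 (u i) j))) ∈ CB n

/-- `CB ∈ E H S Pfin 𝒜`: `CB` contains the clone obtained from some finite power of `CA`
by restricting to an invariant subset and taking the quotient action along a surjection. -/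
def InEHSPfin (CA : OpSet A) (CB : OpSet B) : Prop :=
  ∃ (m : ℕ) (S : Set (Fin m → A)) (h : (Fin m → A) → B),
    (∀ (n : ℕ) (f : (Fin (n+1) → A) → A), f ∈ CA n →
      ∀ t : Fin (n+1) → (Fin m → A), (∀ i, t i ∈ S) → (fun j => f (fun i => t i j)) ∈ S) ∧
    (∀ b : B, ∃ x ∈ S, h x = b) ∧
    (∀ (n : ℕ) (f : (Fin (n+1) → A) → A), f ∈ CA n → ∃ f' ∈ CB n,
      ∀ t : Fin (n+1) → (Fin m → A), (∀ i, t i ∈ S) →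
        h (fun j => f (fun i => t i j)) = f' (fun i => h (t i)))

end Clone

section Pol

variable {σ : Type} {ar : σ → ℕ} {D : Type}

/-- The polymorphism clone of a relational structure. -/
def Pol (S : RelStruct σ ar D) : OpSet D :=
  fun n => { f | ∀ (s : σ) (ts : Fin (n+1) → (Fin (ar s) → D)),
    (∀ i, S.rel s (ts i)) → S.rel s (fun j => f (fun i => ts i j)) }

end Pol

/-- Proposition 6.1 (ii) of the paper. Let `CA`, `CB` be function
clones such that the domain of `CB` is finite. Then `CB ∈ E Tra Pfin CA` iff there
exists a uniformly continuous h1 clone homomorphism from `CA` to `CB`. -/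
theorem stmt15 {A B : Type} [Nonempty A] [Nonempty B] (CA : OpSet A) (CB : OpSet B)
    (hA : IsClone CA) (hB : IsClone CB) (hfin : Finite B) :
    InETraPfin CA CB ↔ ∃ ξ, IsH1Hom CA CB ξ ∧ UniformlyCont CA ξ := by
  constructor
  · rintro ⟨m, h1, h2, hrefl⟩
    refine ⟨fun n f u => h2 (fun j => f (fun i => h1 (u i) j)), ⟨hrefl, ?_⟩, ?_⟩
    · intro n m' f hf p
      rfl
    · intro Bf _
      refine ⟨Set.range (fun p : B × Fin m => h1 p.1 p.2),
        Set.finite_range _, ?_⟩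
      intro n f g _ _ hag u _
      simp only
      congr 1
      funext j
      exact hag _ (fun i => ⟨(u i, j), rfl⟩)
  · rintro ⟨ξ, ⟨hmaps, hh1⟩, hUC⟩
    classical
    obtain ⟨Af0, hAf0fin, hAf0⟩ := hUC Set.univ Set.finite_univ
    set a0 := Classical.arbitrary A with ha0
    set Af : Set A := insert a0 Af0 with hAfdef
    have hAffin : Af.Finite := hAf0fin.insert a0
    have hAfprop : ∀ (n : ℕ) (f g : (Fin (n+1) → A) → A), f ∈ CA n → g ∈ CA n →
        (∀ t, (∀ i, t i ∈ Af) → f t = g t) → ∀ u, ξ n f u = ξ n g u := by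
      intro n f g hf hg hag u
      exact hAf0 n f g hf hg
        (fun t ht => hag t (fun i => Set.mem_insert_of_mem _ (ht i))) u
        (fun i => trivial)
    haveI : Fintype B := Fintype.ofFinite B
    haveI : Fintype ↥Af := hAffin.fintype
    obtain ⟨m₀, hm₀⟩ : ∃ m₀, Fintype.card B = m₀ + 1 :=
      ⟨Fintype.card B - 1, (Nat.succ_pred_eq_of_pos Fintype.card_pos).symm⟩
    let e : Fin (m₀+1) ≃ B := ((Fintype.equivFin B).trans (finCongr hm₀)).symm
    let I := Fin (m₀+1) → ↥Af
    let m := Fintype.card I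
    let eI : I ≃ Fin m := Fintype.equivFin I
    let h1 : B → Fin m → A := fun β j => ((eI.symm j) (e.symm β) : A)
    let Good : (Fin m → A) → ((Fin (m₀+1) → A) → A) → Prop :=
      fun x g => g ∈ CA m₀ ∧ ∀ s : I, x (eI s) = g (fun j => ↑(s j))
    let h2 : (Fin m → A) → B := fun x =>
      if h : ∃ g, Good x g then ξ m₀ h.choose (fun j => e j)
      else Classical.arbitrary B
    have key : ∀ (n : ℕ) (f : (Fin (n+1) → A) → A), f ∈ CA n →
        ∀ u : Fin (n+1) → B,
        h2 (fun j => f (fun i => h1 (u i) j)) = ξ n f u := by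
      intro n f hf u
      set x : Fin m → A := fun j => f (fun i => h1 (u i) j) with hx
      set gu : (Fin (m₀+1) → A) → A := fun t => f (fun i => t (e.symm (u i)))
        with hgu
      have hgumem : gu ∈ CA m₀ :=
        hA.comp n m₀ f (fun i t => t (e.symm (u i))) hf
          (fun i => hA.proj m₀ (e.symm (u i)))
      have hgood : Good x gu := by
        refine ⟨hgumem, fun s => ?_⟩
        show f (fun i => h1 (u i) (eI s)) = gu (fun j => ↑(s j))
        simp only [h1, eI.symm_apply_apply, gu]
      have hex : ∃ g, Good x g := ⟨gu, hgood⟩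
      have h2eq : h2 x = ξ m₀ hex.choose (fun j => e j) := dif_pos hex
      have hchoose : Good x hex.choose := hex.choose_spec
      have hagree : ∀ t : Fin (m₀+1) → A, (∀ j, t j ∈ Af) →
          hex.choose t = gu t := by
        intro t ht
        have h1' := (hchoose.2 (fun j => ⟨t j, ht j⟩)).symm
        have h2' := hgood.2 (fun j => ⟨t j, ht j⟩)
        exact h1'.trans h2'
      have := hAfprop m₀ hex.choose gu hchoose.1 hgumem hagree (fun j => e j)
      rw [h2eq, this]
      have := hh1 n m₀ f hf (fun i => e.symm (u i))
      have h3 : ξ m₀ gu (fun j => e j) =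
          ξ n f (fun i => e (e.symm (u i))) := congrFun this (fun j => e j)
      rw [h3]
      simp
    refine ⟨m, h1, h2, ?_⟩
    intro n f hf
    have : (fun u : Fin (n+1) → B => h2 (fun j => f (fun i => h1 (u i) j)))
        = ξ n f := funext fun u => key n f hf u
    rw [this]
    exact hmaps n f hf
end

section
/- Let 𝒜 be a function clone. Then 𝒜 contains Hagemann–Mitschke operations for some n ≥ 2 (equivalently, by the Hagemann–Mitschke theorem, the variety generated by 𝒜 is congruence n-permutable for some n) if and only if 𝒜 is not strongly colorable by the relational structure ({0,1}; ≤), where ≤ is the usual order relation {(0,0),(0,1),(1,1)} on {0,1}. -/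
/-! ### Colorings of clones by relational structures -/

section Coloring

variable {A : Type}

/-- `F_𝒜(J)`: the closure of the projections `π^J_b` inside `A^{A^J}` under the
componentwise action of the clone `CA`. -/
inductive FreeSet (CA : OpSet A) (J : Type) : ((J → A) → A) → Prop where
  | proj (b : J) : FreeSet CA J (fun x => x b)
  | app {n : ℕ} (f : (Fin (n+1) → A) → A) (hf : f ∈ CA n)
      (g : Fin (n+1) → ((J → A) → A)) (hg : ∀ i, FreeSet CA J (g i)) :
      FreeSet CA J (fun x => f (fun i => g i x))

/-- `R^𝒜`: the closure of `{(π^J_{b1},…,π^J_{bk}) : (b1,…,bk) ∈ R}` under the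
componentwise action of the clone `CA`. -/
inductive RelLift (CA : OpSet A) {J : Type} {k : ℕ} (R : (Fin k → J) → Prop) :
    (Fin k → ((J → A) → A)) → Prop where
  | base (b : Fin k → J) (hb : R b) : RelLift CA R (fun j => fun x => x (b j))
  | app {n : ℕ} (f : (Fin (n+1) → A) → A) (hf : f ∈ CA n)
      (g : Fin (n+1) → (Fin k → ((J → A) → A))) (hg : ∀ i, RelLift CA R (g i)) :
      RelLift CA R (fun j => fun x => f (fun i => g i j x))

/-- A coloring of the clone `CA` by the relational structure `SB`:
a map `F_𝒜(B) → B` sending each lifted relation `R^𝒜` into `R`. -/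
def IsColoring {τ : Type} {br : τ → ℕ} {E : Type} (CA : OpSet A) (SB : RelStruct τ br E)
    (c : {g : (E → A) → A // FreeSet CA E g} → E) : Prop :=
  ∀ (s : τ) (t : Fin (br s) → ((E → A) → A)), RelLift CA (SB.rel s) t →
    ∀ hmem : ∀ j, FreeSet CA E (t j), SB.rel s (fun j => c ⟨t j, hmem j⟩)

/-- A strong coloring: a coloring with `c (π^B_b) = b` for all `b`. -/
def IsStrongColoring {τ : Type} {br : τ → ℕ} {E : Type} (CA : OpSet A)
    (SB : RelStruct τ br E) (c : {g : (E → A) → A // FreeSet CA E g} → E) : Prop :=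
  IsColoring CA SB c ∧ ∀ b : E, c ⟨fun x => x b, FreeSet.proj b⟩ = b

end Coloring

/-- The relational structure `({0,1}; ≤)`: domain `Fin 2` with one binary relation,
the usual order `{(0,0),(0,1),(1,1)}`. -/
def TwoLE : RelStruct Unit (fun _ => 2) (Fin 2) where
  rel := fun _ t => t 0 ≤ t 1

/-- The clone `CA` contains Hagemann–Mitschke operations (for some `n ≥ 2`, here
`n = m + 2`, so that there are `n - 1 = m + 1` ternary operations `p_1, …, p_{n-1}`
with `p_1(x,y,y) ≈ x`, `p_{n-1}(x,x,y) ≈ y` and `p_i(x,x,y) ≈ p_{i+1}(x,y,y)`). -/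
def HasHagemannMitschke {A : Type} (CA : OpSet A) : Prop :=
  ∃ (m : ℕ) (p : Fin (m+1) → ((Fin 3 → A) → A)),
    (∀ i, p i ∈ CA 2) ∧
    (∀ x y : A, p 0 ![x, y, y] = x) ∧
    (∀ x y : A, p (Fin.last m) ![x, x, y] = y) ∧
    (∀ (i : Fin m) (x y : A), p i.castSucc ![x, x, y] = p i.succ ![x, y, y])

section Stmt18Aux

variable {A : Type} {CA : OpSet A}

private lemma fin2cases (j : Fin 2) : j = 0 ∨ j = 1 := by omega

/-- The "one-step" relation on `F_𝒜(Fin 2)` corresponding to the lifted order. -/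
def RStep (CA : OpSet A) (g h : (Fin 2 → A) → A) : Prop :=
  ∃ f, f ∈ CA 2 ∧ g = (fun v => f ![v 0, v 0, v 1]) ∧ h = (fun v => f ![v 0, v 1, v 1])

lemma relLift_char (hCA : IsClone CA) {t : Fin 2 → ((Fin 2 → A) → A)}
    (ht : RelLift CA (TwoLE.rel ()) t) : RStep CA (t 0) (t 1) := by
  induction ht with
  | base b hb =>
    have hb' : b 0 ≤ b 1 := hb
    rcases fin2cases (b 0) with e0 | e0 <;> rcases fin2cases (b 1) with e1 | e1
    · exact ⟨fun w => w 0, hCA.proj 2 0, by funext v; simp [e0], by funext v; simp [e1]⟩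
    · exact ⟨fun w => w 1, hCA.proj 2 1, by funext v; simp [e0], by funext v; simp [e1]⟩
    · rw [e0, e1] at hb'; exact absurd hb' (by decide)
    · exact ⟨fun w => w 2, hCA.proj 2 2, by funext v; simp [e0], by funext v; simp [e1]⟩
  | app f hf g hg ih =>
    choose fi hfi e0 e1 using ih
    refine ⟨fun w => f (fun i => fi i w), hCA.comp _ _ f fi hf hfi, ?_, ?_⟩
    · funext v
      show f (fun i => g i 0 v) = _
      congr 1; funext i; rw [e0 i]
    · funext v
      show f (fun i => g i 1 v) = _
      congr 1; funext i; rw [e1 i]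

lemma relLift_pair (f : (Fin 3 → A) → A) (hf : f ∈ CA 2)
    (t : Fin 2 → ((Fin 2 → A) → A))
    (h0 : t 0 = fun v => f ![v 0, v 0, v 1]) (h1 : t 1 = fun v => f ![v 0, v 1, v 1]) :
    RelLift CA (TwoLE.rel ()) t := by
  have hb : ∀ i : Fin 3,
      TwoLE.rel () ((![![0,0],![0,1],![1,1]] : Fin 3 → Fin 2 → Fin 2) i) := by
    intro i
    show (![![0,0],![0,1],![1,1]] : Fin 3 → Fin 2 → Fin 2) i 0
      ≤ (![![0,0],![0,1],![1,1]] : Fin 3 → Fin 2 → Fin 2) i 1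
    fin_cases i <;> decide
  have key := RelLift.app (CA := CA) (R := TwoLE.rel ()) f hf
      (fun i => fun j x => x ((![![0,0],![0,1],![1,1]] : Fin 3 → Fin 2 → Fin 2) i j))
      (fun i => RelLift.base _ (hb i))
  have e : t = fun j x => f (fun i => x ((![![0,0],![0,1],![1,1]] : Fin 3 → Fin 2 → Fin 2) i j)) := by
    funext j
    rcases fin2cases j with rfl | rfl
    · rw [h0]; funext v; congr 1; funext i; fin_cases i <;> rfl
    · rw [h1]; funext v; congr 1; funext i; fin_cases i <;> rfl
  rw [e]; exact key

lemma free_vec (f : (Fin 3 → A) → A) (hf : f ∈ CA 2) (a b c : Fin 2) :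
    FreeSet CA (Fin 2) (fun v => f ![v a, v b, v c]) := by
  have key := FreeSet.app (CA := CA) (J := Fin 2) f hf
      (fun i => fun x => x (![a, b, c] i)) (fun i => FreeSet.proj _)
  have e : (fun v : Fin 2 → A => f ![v a, v b, v c])
      = fun x => f (fun i => x (![a, b, c] i)) := by
    funext v; congr 1; funext i; fin_cases i <;> rfl
  rw [e]; exact key

lemma stmt18_forward (hCA : IsClone CA) (hm : HasHagemannMitschke CA) :
    ¬ ∃ c, IsStrongColoring CA TwoLE c := by
  obtain ⟨m, p, hp, hfirst, hlast, hchain⟩ := hm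
  rintro ⟨c, hcol, hproj⟩
  have hq : ∀ i, (fun w : Fin 3 → A => p i ![w 2, w 1, w 0]) ∈ CA 2 := by
    intro i
    have key := hCA.comp 2 2 (p i) (fun j => fun w => w ((![2,1,0] : Fin 3 → Fin 3) j))
        (hp i) (fun j => hCA.proj 2 _)
    have e : (fun w : Fin 3 → A => p i ![w 2, w 1, w 0])
        = fun t => p i (fun j => t ((![2,1,0] : Fin 3 → Fin 3) j)) := by
      funext w; congr 1; funext j; fin_cases j <;> rfl
    rw [e]; exact key
  have hpair : ∀ i : Fin (m+1), RelLift CA (TwoLE.rel ())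
      ![fun v => p i ![v 1, v 0, v 0], fun v => p i ![v 1, v 1, v 0]] := by
    intro i
    refine relLift_pair (fun w => p i ![w 2, w 1, w 0]) (hq i) _ ?_ ?_
    · show (fun v : Fin 2 → A => p i ![v 1, v 0, v 0]) = _
      funext v; congr 1
    · show (fun v : Fin 2 → A => p i ![v 1, v 1, v 0]) = _
      funext v; congr 1
  have hmem : ∀ (i : Fin (m+1)) (j : Fin 2), FreeSet CA (Fin 2)
      ((![fun v => p i ![v 1, v 0, v 0], fun v => p i ![v 1, v 1, v 0]] :
        Fin 2 → ((Fin 2 → A) → A)) j) := by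
    intro i j
    rcases fin2cases j with rfl | rfl
    · show FreeSet CA (Fin 2) (fun v => p i ![v 1, v 0, v 0])
      exact free_vec (p i) (hp i) 1 0 0
    · show FreeSet CA (Fin 2) (fun v => p i ![v 1, v 1, v 0])
      exact free_vec (p i) (hp i) 1 1 0
  have hle : ∀ i : Fin (m+1),
      c ⟨fun v => p i ![v 1, v 0, v 0], hmem i 0⟩
        ≤ c ⟨fun v => p i ![v 1, v 1, v 0], hmem i 1⟩ := by
    intro i
    exact hcol () _ (hpair i) (hmem i)
  have main : ∀ i : Fin (m+1),
      (1 : Fin 2) ≤ c ⟨fun v => p i ![v 1, v 1, v 0], hmem i 1⟩ := by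
    intro i
    induction i using Fin.induction with
    | zero =>
      have e : (fun v : Fin 2 → A => p 0 ![v 1, v 0, v 0]) = fun x => x 1 := by
        funext v; exact hfirst (v 1) (v 0)
      have h1 : c ⟨fun v : Fin 2 → A => p 0 ![v 1, v 0, v 0], hmem 0 0⟩ = 1 := by
        rw [show (⟨fun v : Fin 2 → A => p 0 ![v 1, v 0, v 0], hmem 0 0⟩ :
            {g : (Fin 2 → A) → A // FreeSet CA (Fin 2) g})
            = ⟨fun x => x 1, FreeSet.proj 1⟩ from Subtype.ext e]
        exact hproj 1
      calc (1 : Fin 2) = _ := h1.symm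
        _ ≤ _ := hle 0
    | succ j ih =>
      have e : (fun v : Fin 2 → A => p j.castSucc ![v 1, v 1, v 0])
          = fun v => p j.succ ![v 1, v 0, v 0] := by
        funext v; exact hchain j (v 1) (v 0)
      have heq : c ⟨fun v : Fin 2 → A => p j.castSucc ![v 1, v 1, v 0], hmem j.castSucc 1⟩
          = c ⟨fun v : Fin 2 → A => p j.succ ![v 1, v 0, v 0], hmem j.succ 0⟩ :=
        congrArg c (Subtype.ext e)
      calc (1 : Fin 2) ≤ _ := ih
        _ = _ := heq
        _ ≤ _ := hle j.succ
  have hend := main (Fin.last m)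
  have e : (fun v : Fin 2 → A => p (Fin.last m) ![v 1, v 1, v 0]) = fun x => x 0 := by
    funext v; exact hlast (v 1) (v 0)
  rw [show (⟨fun v : Fin 2 → A => p (Fin.last m) ![v 1, v 1, v 0], hmem (Fin.last m) 1⟩ :
      {g : (Fin 2 → A) → A // FreeSet CA (Fin 2) g})
      = ⟨fun x => x 0, FreeSet.proj 0⟩ from Subtype.ext e, hproj 0] at hend
  exact absurd hend (by decide)

lemma chain_lemma {g : (Fin 2 → A) → A}
    (hg : Relation.ReflTransGen (RStep CA) (fun v => v 1) g) :
    (g = fun v => v 1) ∨ ∃ m, ∃ p : Fin (m+1) → ((Fin 3 → A) → A),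
      (∀ i, p i ∈ CA 2) ∧ (∀ x y : A, p (Fin.last m) ![x, x, y] = y) ∧
      (∀ (i : Fin m) (x y : A), p i.castSucc ![x, x, y] = p i.succ ![x, y, y]) ∧
      (∀ x y : A, p 0 ![x, y, y] = g ![x, y]) := by
  induction hg with
  | refl => exact Or.inl rfl
  | tail hab hbc ih =>
    obtain ⟨f, hf, hb, hc⟩ := hbc
    right
    rcases ih with hbl | ⟨m, p, hp, hlast, hchain, h0⟩
    · refine ⟨0, fun _ => f, fun _ => hf, ?_, fun i => i.elim0, ?_⟩
      · intro x y
        have := congrFun (hb.symm.trans hbl) ![x, y]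
        simpa using this
      · intro x y
        have := congrFun hc ![x, y]
        simpa using this.symm
    · refine ⟨m + 1, Fin.cons f p, ?_, ?_, ?_, ?_⟩
      · intro i
        induction i using Fin.cases with
        | zero => simpa using hf
        | succ j => simpa using hp j
      · intro x y
        rw [← Fin.succ_last, Fin.cons_succ]
        exact hlast x y
      · intro i x y
        induction i using Fin.cases with
        | zero =>
          rw [Fin.castSucc_zero, Fin.cons_zero,
            show (0 : Fin (m+1)).succ = (0 : Fin (m+1)).succ from rfl, Fin.cons_succ]
          have h1 := congrFun hb ![x, y]
          have h2 := h0 x y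
          simp only [Matrix.cons_val_zero, Matrix.cons_val_one, Matrix.head_cons] at h1 h2
          rw [h2, h1]
        | succ j =>
          rw [← Fin.succ_castSucc, Fin.cons_succ, Fin.cons_succ]
          exact hchain j x y
      · intro x y
        rw [Fin.cons_zero]
        have := congrFun hc ![x, y]
        simpa using this.symm

lemma stmt18_reverse (hCA : IsClone CA) (h : ¬ HasHagemannMitschke CA) :
    ∃ c, IsStrongColoring CA TwoLE c := by
  classical
  refine ⟨fun g => if Relation.ReflTransGen (RStep CA) (fun v => v 1) g.1 then 1 else 0,
    ?_, ?_⟩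
  · intro s t ht hmem
    have hr := relLift_char hCA ht
    show (if Relation.ReflTransGen (RStep CA) (fun v => v 1) (t 0) then (1 : Fin 2) else 0)
      ≤ (if Relation.ReflTransGen (RStep CA) (fun v => v 1) (t 1) then 1 else 0)
    by_cases h0 : Relation.ReflTransGen (RStep CA) (fun v => v 1) (t 0)
    · rw [if_pos h0, if_pos (h0.tail hr)]
    · rw [if_neg h0]
      exact Fin.zero_le _
  · intro b
    rcases fin2cases b with rfl | rfl
    · show (if Relation.ReflTransGen (RStep CA) (fun v => v 1) (fun x => x 0) then (1 : Fin 2)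
        else 0) = 0
      rw [if_neg]
      intro hreach
      apply h
      rcases chain_lemma hreach with heq | ⟨m, p, hp, hlast, hchain, h0⟩
      · have hxy : ∀ x y : A, x = y := by
          intro x y
          have := congrFun heq ![x, y]
          simpa using this
        refine ⟨0, fun _ => fun w => w 0, fun _ => hCA.proj 2 0, ?_, ?_, fun i => i.elim0⟩
        · intro x y; simp
        · intro x y; simpa using hxy x y
      · refine ⟨m, p, hp, ?_, hlast, hchain⟩
        intro x y
        have := h0 x y
        simpa using this
    · show (if Relation.ReflTransGen (RStep CA) (fun v => v 1) (fun x => x 1) then (1 : Fin 2)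
        else 0) = 1
      rw [if_pos Relation.ReflTransGen.refl]

end Stmt18Aux

/-- Proposition 7.1 of the paper. A function clone contains
Hagemann–Mitschke operations for some `n ≥ 2` (equivalently, the variety it generates
is congruence `n`-permutable for some `n`) iff it is not strongly colorable by the
relational structure `({0,1}; ≤)`. -/
theorem stmt18 {A : Type} (CA : OpSet A) (hCA : IsClone CA) :
    HasHagemannMitschke CA ↔ ¬ ∃ c, IsStrongColoring CA TwoLE c := by
  constructor
  · exact stmt18_forward hCA
  · intro hnc
    by_contra hm
    exact hnc (stmt18_reverse hCA hm)
end

section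
/- Let A be an at most countable ω-categorical relational structure and let B be the structure obtained from the model-complete core of A (i.e., the model-complete core homomorphically equivalent to A) by adding finitely many singleton unary relations. Then there exist a uniformly continuous h1 clone homomorphism from Pol(A) to Pol(B) and a uniformly continuous h1 clone homomorphism from Pol(B) to Pol(A). -/
/-- The expansion of a relational structure by singleton unary relations `{cs i}`
(the `i`-th added relation has arity 1 and contains exactly the tuple `(cs i)`). -/
def addSingletons {σ : Type} {ar : σ → ℕ} {C : Type} (S : RelStruct σ ar C)
    {k : ℕ} (cs : Fin k → C) :
    RelStruct (σ ⊕ Fin k) (Sum.elim ar (fun _ => 1)) C where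
  rel := fun s => match s with
    | .inl s => fun t => S.rel s t
    | .inr i => fun t => ∀ j, t j = cs i

/-- Corollary 8.1 of the paper. Let `SA` be an at most countable
ω-categorical structure, let `SC` be its model-complete core (an at most countable
ω-categorical model-complete core homomorphically equivalent to `SA`), and let `SB`
be `SC` expanded by finitely many singleton unary relations `{cs 0}, …, {cs (k-1)}`.
Then there exist uniformly continuous h1 clone homomorphisms `Pol SA → Pol SB` and
`Pol SB → Pol SA`. -/
theorem stmt19 {σ : Type} {ar : σ → ℕ} {D C : Type} [Nonempty D] [Countable D] [Nonempty C] [Countable C]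
    (SA : RelStruct σ ar D) (SC : RelStruct σ ar C)
    (hA : OmegaCategorical SA) (hC : OmegaCategorical SC)
    (hmc : ModelCompleteCore SC) (heq : HomEquiv SA SC)
    {k : ℕ} (cs : Fin k → C) :
    (∃ ξ, IsH1Hom (Pol SA) (Pol (addSingletons SC cs)) ξ ∧
        UniformlyCont (Pol SA) ξ) ∧
    (∃ ξ, IsH1Hom (Pol (addSingletons SC cs)) (Pol SA) ξ ∧
        UniformlyCont (Pol (addSingletons SC cs)) ξ) := by
  classical
  obtain ⟨⟨e, he⟩, ⟨i, hi⟩⟩ := heq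
  -- choose, for each tuple of target values, an automorphism hitting them at `cs` (if any)
  have key : ∀ v : Fin k → C, ∃ g : C ≃ C,
      (∃ g' : C ≃ C, IsAutomorphism SC g' ∧ ∀ j, g' (cs j) = v j) →
      IsAutomorphism SC g ∧ ∀ j, g (cs j) = v j := by
    intro v
    by_cases h : ∃ g' : C ≃ C, IsAutomorphism SC g' ∧ ∀ j, g' (cs j) = v j
    · obtain ⟨g, hg⟩ := h; exact ⟨g, fun _ => hg⟩
    · exact ⟨Equiv.refl C, fun h' => absurd h' h⟩
  choose α hα using key
  -- for every polymorphism of SA the witness exists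
  have hwit : ∀ (n : ℕ) (f : (Fin (n+1) → D) → D), f ∈ Pol SA n →
      ∃ g' : C ≃ C, IsAutomorphism SC g' ∧
        ∀ j, g' (cs j) = e (f (fun _ => i (cs j))) := by
    intro n f hf
    have hd : IsHomOf SC SC (fun x => e (f (fun _ => i x))) := by
      intro s t ht
      have h1 : SA.rel s (fun j => i (t j)) := hi s t ht
      have h2 : SA.rel s (fun j => f (fun _ => i (t j))) :=
        hf s (fun _ j => i (t j)) (fun _ => h1)
      exact he s _ h2
    obtain ⟨g, hg, hgv⟩ := hmc _ hd (Set.range cs) (Set.finite_range cs)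
    exact ⟨g, hg, fun j => hgv (cs j) ⟨j, rfl⟩⟩
  constructor
  · -- forward direction
    refine ⟨fun n f t => (α (fun j => e (f (fun _ => i (cs j))))).symm
        (e (f (fun x => i (t x)))), ⟨?_, ?_⟩, ?_⟩
    · -- MapsCloneInto
      intro n f hf
      have hspec := hα _ (hwit n f hf)
      intro s ts hts
      match s with
      | Sum.inl s =>
        have h1 : ∀ idx, SA.rel s (fun j => i (ts idx j)) :=
          fun idx => hi s (ts idx) (hts idx)
        have h2 : SA.rel s (fun j => f (fun idx => i (ts idx j))) :=
          hf s (fun idx j => i (ts idx j)) h1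
        have h3 : SC.rel s (fun j => e (f (fun idx => i (ts idx j)))) := he s _ h2
        exact hspec.1.2 s _ h3
      | Sum.inr m =>
        intro j
        have hts' : (fun idx => ts idx j) = fun _ : Fin (n+1) => cs m :=
          funext fun idx => hts idx j
        show (α (fun j => e (f (fun _ => i (cs j))))).symm
            (e (f (fun x => i ((fun idx => ts idx j) x)))) = cs m
        rw [hts']
        exact (Equiv.symm_apply_eq _).2 (hspec.2 m).symm
    · -- PreservesH1
      intro n m f _ p
      rfl
    · -- UniformlyCont
      intro Bf hBf
      refine ⟨i '' Bf ∪ Set.range (fun j : Fin k => i (cs j)),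
        ((hBf.image i).union (Set.finite_range _)), ?_⟩
      intro n f g hf hg hfg u hu
      have hv : (fun j => e (f (fun _ => i (cs j)))) =
          (fun j => e (g (fun _ => i (cs j)))) :=
        funext fun j => congrArg e
          (hfg (fun _ => i (cs j)) (fun _ => Or.inr ⟨j, rfl⟩))
      have hu' : f (fun x => i (u x)) = g (fun x => i (u x)) :=
        hfg _ (fun x => Or.inl ⟨u x, hu x, rfl⟩)
      show (α (fun j => e (f (fun _ => i (cs j))))).symm (e (f (fun x => i (u x))))
        = (α (fun j => e (g (fun _ => i (cs j))))).symm (e (g (fun x => i (u x))))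
      rw [hv, hu']
  · -- backward direction
    refine ⟨fun n f t => i (f (fun x => e (t x))), ⟨?_, ?_⟩, ?_⟩
    · intro n f hf
      intro s ts hts
      have h1 : ∀ idx, (addSingletons SC cs).rel (Sum.inl s) (fun j => e (ts idx j)) :=
        fun idx => he s (ts idx) (hts idx)
      have h2 := hf (Sum.inl s) (fun idx j => e (ts idx j)) h1
      exact hi s _ h2
    · intro n m f _ p
      rfl
    · intro Bf hBf
      refine ⟨e '' Bf, hBf.image e, ?_⟩
      intro n f g hf hg hfg u hu
      show i (f (fun x => e (u x))) = i (g (fun x => e (u x)))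
      exact congrArg i (hfg _ (fun x => ⟨u x, hu x, rfl⟩))
end
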